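/- For every integer n ≥ 1 there exists a bijection Υ from ℋ_n to Av_n(321) such that for every (P,Q) ∈ ℋ_n, area(P,Q) = inv Υ(P,Q) and col(P,Q) = lrm Υ(P,Q). -/

import Mathlib

open Finset MvPolynomial

/-- `σ` avoids the pattern 321. -/
def Avoids321 {n : ℕ} (σ : Equiv.Perm (Fin n)) : Prop :=
  ¬ ∃ i j k : Fin n, i < j ∧ j < k ∧ σ k < σ j ∧ σ j < σ i

instance {n : ℕ} : DecidablePred (Avoids321 (n := n)) := fun σ => by
  unfold Avoids321; infer_instance

/-- The set of 321-avoiding permutations of `{1,…,n}` (modelled on `Fin n`). -/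
def Av (n : ℕ) : Finset (Equiv.Perm (Fin n)) := univ.filter Avoids321

/-- The number of inversions of a permutation. -/
def invPerm {n : ℕ} (σ : Equiv.Perm (Fin n)) : ℕ :=
  (univ.filter (fun p : Fin n × Fin n => p.1 < p.2 ∧ σ p.2 < σ p.1)).card

/-- Position `i` is a left-right maximum of `σ`. -/
def IsLRMax {n : ℕ} (σ : Equiv.Perm (Fin n)) (i : Fin n) : Prop :=
  ∀ j, j ≤ i → σ j ≤ σ i

instance {n : ℕ} (σ : Equiv.Perm (Fin n)) : DecidablePred (IsLRMax σ) := fun i => by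
  unfold IsLRMax; infer_instance

/-- The number of left-right maxima of `σ`. -/
def lrm {n : ℕ} (σ : Equiv.Perm (Fin n)) : ℕ := (univ.filter (IsLRMax σ)).card

/-- The number of fixed points of `σ`. -/
def fixPerm {n : ℕ} (σ : Equiv.Perm (Fin n)) : ℕ := (univ.filter (fun i => σ i = i)).card

/-- The number of excedances of `σ`. -/
def excPerm {n : ℕ} (σ : Equiv.Perm (Fin n)) : ℕ := (univ.filter (fun i => i < σ i)).card

/-- The descent set of `σ`: `i` is in it iff `σ` descends from position `i+1` to `i+2`
(0-based index `i` corresponds to the 1-based descent position `i+1`). -/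
def DesPerm {n : ℕ} (σ : Equiv.Perm (Fin n)) : Finset (Fin n) :=
  univ.filter (fun i => ∃ h : i.val + 1 < n, σ ⟨i.val + 1, h⟩ < σ i)

/-- The number of descents of `σ`. -/
def desPerm {n : ℕ} (σ : Equiv.Perm (Fin n)) : ℕ := (DesPerm σ).card

/-- The major index of `σ` (descents at 1-based positions). -/
def majPerm {n : ℕ} (σ : Equiv.Perm (Fin n)) : ℕ := ∑ i ∈ DesPerm σ, (i.val + 1)

/-- Number of `true` letters among the first `i` letters of the word `P`. -/
def UpCt {m : ℕ} (P : Fin m → Bool) (i : ℕ) : ℕ :=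
  (univ.filter (fun j : Fin m => j.val < i ∧ P j = true)).card

/-- Number of `false` letters among the first `i` letters of the word `P`. -/
def DownCt {m : ℕ} (P : Fin m → Bool) (i : ℕ) : ℕ :=
  (univ.filter (fun j : Fin m => j.val < i ∧ P j = false)).card

/-- A word (with `true` = U, `false` = D) is a Dyck word: every prefix has at least as
many U's as D's, and the total numbers of U's and D's agree. -/
def IsDyck {m : ℕ} (P : Fin m → Bool) : Prop :=
  (∀ i, i ≤ m → DownCt P i ≤ UpCt P i) ∧ UpCt P m = DownCt P m

instance {m : ℕ} : DecidablePred (IsDyck (m := m)) := fun P => by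
  unfold IsDyck; infer_instance

/-- The Dyck paths of semilength `n`, as words of length `2n`. -/
def DyckSet (n : ℕ) : Finset (Fin (2 * n) → Bool) := univ.filter IsDyck

/-- Valleys (descents of the word, i.e. factors `DU`), recorded by the 0-based
index of the `D` step. -/
def Valleys {m : ℕ} (P : Fin m → Bool) : Finset (Fin m) :=
  univ.filter (fun j => P j = false ∧ ∃ h : j.val + 1 < m, P ⟨j.val + 1, h⟩ = true)

/-- `des` of a path: the number of valleys. -/
def desPath {m : ℕ} (P : Fin m → Bool) : ℕ := (Valleys P).card

/-- `maj` of a path: the sum of the (1-based) positions of the descents. -/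
def majPath {m : ℕ} (P : Fin m → Bool) : ℕ := ∑ j ∈ Valleys P, (j.val + 1)

/-- `α(P) = Σ_{i ∈ Des P} |p_i(P)|_U`. -/
def alphaPath {m : ℕ} (P : Fin m → Bool) : ℕ := ∑ j ∈ Valleys P, UpCt P (j.val + 1)

/-- `β(P) = Σ_{i ∈ Des P} |p_i(P)|_D`. -/
def betaPath {m : ℕ} (P : Fin m → Bool) : ℕ := ∑ j ∈ Valleys P, DownCt P (j.val + 1)

/-- Peaks (factors `UD`), recorded by the 0-based index of the `U` step. -/
def Peaks {m : ℕ} (P : Fin m → Bool) : Finset (Fin m) :=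
  univ.filter (fun j => P j = true ∧ ∃ h : j.val + 1 < m, P ⟨j.val + 1, h⟩ = false)

/-- The number of peaks of `P`. -/
def npea {m : ℕ} (P : Fin m → Bool) : ℕ := (Peaks P).card

/-- `spea P = Σ_p (HT(p) - 1)` over peaks `p`, where `HT` is the height of a peak. -/
def spea {m : ℕ} (P : Fin m → Bool) : ℕ :=
  ∑ j ∈ Peaks P, (UpCt P (j.val + 1) - DownCt P (j.val + 1) - 1)

/-- The height of the path after `i` steps. -/
def htAt {m : ℕ} (P : Fin m → Bool) (i : ℕ) : ℤ := (UpCt P i : ℤ) - (DownCt P i : ℤ)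

/-- The start of the tunnel of the valley whose lowest lattice point comes after
`k` steps: the largest `m < k` at which the path has the same height. -/
def tunnelStart {m : ℕ} (P : Fin m → Bool) (k : ℕ) : ℕ :=
  ((Finset.range k).filter (fun j => htAt P j = htAt P k)).sup id

/-- `stun P`: the sum over all valleys of the semilengths of their tunnels. -/
def stun {m : ℕ} (P : Fin m → Bool) : ℕ :=
  ∑ j ∈ Valleys P, (j.val + 1 - tunnelStart P (j.val + 1)) / 2

/-- A parallelogram polyomino: a pair `(U,V)` of `N/E`-paths (`true` = N, `false` = E)
of the same length, with the same endpoints, such that `U` stays strictly above `V`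
except at the endpoints (i.e. every proper nonempty prefix of `U` contains strictly
more `N`-steps than the corresponding prefix of `V`).  As noted by Fürlinger and
Hofbauer, the lower path begins with an `E`-step and the upper path ends with an
`E`-step; this is automatic for `m ≥ 2` and fixes the convention in the degenerate
case `m = 1`. -/
def IsParaPoly {m : ℕ} (U V : Fin m → Bool) : Prop :=
  UpCt U m = UpCt V m ∧ (∀ i, i < m → 1 ≤ i → UpCt V i < UpCt U i) ∧
    UpCt V 1 = 0 ∧ UpCt U m = UpCt U (m - 1)

instance {m : ℕ} (U V : Fin m → Bool) : Decidable (IsParaPoly U V) := by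
  unfold IsParaPoly; infer_instance

/-- The parallelogram polyominoes of size `n`. -/
def ParaSet (n : ℕ) : Finset ((Fin n → Bool) × (Fin n → Bool)) :=
  univ.filter (fun UV => IsParaPoly UV.1 UV.2)

/-- A shortened polyomino: a pair `(P,Q)` of `N/E`-paths of the same length with the
same endpoints such that `P` stays weakly above `Q` and the two paths share no
`N`-steps (an `N`-step is shared exactly when it occurs at the same index with equal
prefix `N`-counts). -/
def IsShortPoly {m : ℕ} (P Q : Fin m → Bool) : Prop :=
  UpCt P m = UpCt Q m ∧ (∀ i, i ≤ m → UpCt Q i ≤ UpCt P i) ∧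
    ∀ j : Fin m, UpCt P j.val = UpCt Q j.val → ¬(P j = true ∧ Q j = true)

instance {m : ℕ} (P Q : Fin m → Bool) : Decidable (IsShortPoly P Q) := by
  unfold IsShortPoly; infer_instance

/-- The shortened polyominoes of size `n`. -/
def ShortSet (n : ℕ) : Finset ((Fin n → Bool) × (Fin n → Bool)) :=
  univ.filter (fun PQ => IsShortPoly PQ.1 PQ.2)

/-- The sum, over the `E`-steps of a path, of their heights (`N`-count before the step). -/
def eSum {m : ℕ} (W : Fin m → Bool) : ℕ :=
  ∑ j ∈ univ.filter (fun j : Fin m => W j = false), UpCt W j.val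

/-- The area between the upper path `U` and the lower path `V`. -/
def areaPoly {m : ℕ} (U V : Fin m → Bool) : ℕ := eSum U - eSum V

/-- The number of columns spanned: the number of `E`-steps of the path. -/
def colPoly {m : ℕ} (W : Fin m → Bool) : ℕ := (univ.filter (fun j : Fin m => W j = false)).card

/-- `I_n(q,t) = Σ_{σ ∈ Av_n(321)} q^{inv σ} t^{lrm σ}`, with `q = X 0`, `t = X 1`. -/
noncomputable def IPoly (n : ℕ) : MvPolynomial (Fin 2) ℤ :=
  ∑ σ ∈ Av n, X 0 ^ invPerm σ * X 1 ^ lrm σ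

/-- `M_n(q,t) = Σ_{σ ∈ Av_n(321)} q^{maj σ} t^{des σ}`, with `q = X 0`, `t = X 1`. -/
noncomputable def MPoly (n : ℕ) : MvPolynomial (Fin 2) ℤ :=
  ∑ σ ∈ Av n, X 0 ^ majPerm σ * X 1 ^ desPerm σ

/-- `I_n(q,t,x) = Σ_{σ ∈ Av_n(321)} q^{inv σ} t^{lrm σ} x^{fix σ}`,
with `q = X 0`, `t = X 1`, `x = X 2`. -/
noncomputable def IPoly3 (n : ℕ) : MvPolynomial (Fin 3) ℤ :=
  ∑ σ ∈ Av n, X 0 ^ invPerm σ * X 1 ^ lrm σ * X 2 ^ fixPerm σ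

/-- `C_n(a,b;t) = Σ_{P ∈ D_n} a^{α(P)} b^{β(P)} t^{des P}`,
with `a = X 0`, `b = X 1`, `t = X 2`. -/
noncomputable def CPoly (n : ℕ) : MvPolynomial (Fin 3) ℤ :=
  ∑ P ∈ DyckSet n, X 0 ^ alphaPath P * X 1 ^ betaPath P * X 2 ^ desPath P

/-- `P_n(q,t) = Σ_{(U,V) ∈ 𝒫_n} q^{area(U,V)} t^{col(U,V)}`, with `q = X 0`, `t = X 1`. -/
noncomputable def PPoly (n : ℕ) : MvPolynomial (Fin 2) ℤ :=
  ∑ UV ∈ ParaSet n, X 0 ^ areaPoly UV.1 UV.2 * X 1 ^ colPoly UV.1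

/-- `I_n(-1,t) = Σ_{σ ∈ Av_n(321)} (-1)^{inv σ} t^{lrm σ} ∈ ℤ[t]`. -/
noncomputable def ISign (n : ℕ) : Polynomial ℤ :=
  ∑ σ ∈ Av n, Polynomial.C ((-1 : ℤ) ^ invPerm σ) * Polynomial.X ^ lrm σ

/-- Substitution `t ↦ q^k t` for polynomials in `q = X 0`, `t = X 1`. -/
noncomputable def subT (k : ℕ) (f : MvPolynomial (Fin 2) ℤ) : MvPolynomial (Fin 2) ℤ :=
  bind₁ (fun i : Fin 2 => if i = 0 then X 0 else X 0 ^ k * X 1) f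

/-- Substitution `t ↦ u` (third variable) for polynomials in `a = X 0`, `b = X 1`, `t = X 2`. -/
noncomputable def subT3 (u : MvPolynomial (Fin 3) ℤ) (f : MvPolynomial (Fin 3) ℤ) :
    MvPolynomial (Fin 3) ℤ :=
  bind₁ (fun i : Fin 3 => if i = 2 then u else X i) f

/-- Substitution `x ↦ 1` (third variable) for polynomials in `q = X 0`, `t = X 1`, `x = X 2`. -/
noncomputable def subX1 (f : MvPolynomial (Fin 3) ℤ) : MvPolynomial (Fin 3) ℤ :=
  bind₁ (fun i : Fin 3 => if i = 2 then 1 else X i) f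

/-- `val σ`: indicator vector of left-right maximum values (`val σ i = 1` iff the value `i`
occurs at a left-right maximum position of `σ`). -/
def valVec {n : ℕ} (σ : Equiv.Perm (Fin n)) (i : Fin n) : ℕ :=
  if ∃ j, IsLRMax σ j ∧ σ j = i then 1 else 0

/-- `pos σ`: indicator vector of left-right maximum positions. -/
def posVec {n : ℕ} (σ : Equiv.Perm (Fin n)) (i : Fin n) : ℕ :=
  if IsLRMax σ i then 1 else 0

/-!
A 321-avoiding permutation is the union of two increasing subsequences, its left-to-right maxima
and the remaining entries, so it is determined by the set `S` of positions and the set `T` of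
values of its left-to-right maxima. A pair `(S, T)` arises this way exactly when every prefix
contains at least as many elements of `S` as of `T`, strictly more when it ends just before a
position outside `S`. Taking for `S` the `E`-steps of `Q` and for `T` those of `P`, these are
exactly the conditions defining a shortened polyomino. The columns then correspond to the
left-to-right maxima, and since in a 321-avoiding permutation only a left-to-right maximum at
position `a` starts inversions, exactly `σ a - a` of them, the inversions add up to the area.
-/

variable {n : ℕ}

section CountBelow

def countBelow (A : Finset (Fin n)) (m : ℕ) : ℕ := #{a ∈ A | a.val < m}

variable (A : Finset (Fin n))

lemma countBelow_add_countBelow_compl {m : ℕ} (hm : m ≤ n) :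
    countBelow A m + countBelow Aᶜ m = m := by
  rw [countBelow, countBelow,
    ← card_union_of_disjoint (disjoint_filter_filter disjoint_compl_right), ← filter_union,
    union_compl, Fin.card_filter_val_lt, min_eq_right hm]

lemma countBelow_le_self {m : ℕ} (hm : m ≤ n) : countBelow A m ≤ m :=
  (Nat.le_add_right _ _).trans (countBelow_add_countBelow_compl A hm).le

lemma countBelow_of_le {m : ℕ} (hm : n ≤ m) : countBelow A m = #A := by
  rw [countBelow, filter_true_of_mem fun a _ => a.isLt.trans_le hm]

lemma countBelow_mono : Monotone (countBelow A) := fun _ _ h =>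
  card_le_card (monotone_filter_right A fun _ _ ha => ha.trans_le h)

variable {A}

lemma countBelow_lt_countBelow_iff {a : Fin n} (ha : a ∈ A) {m : ℕ} :
    countBelow A a < countBelow A m ↔ (a : ℕ) < m := by
  refine ⟨fun h => ?_, fun h => card_lt_card ?_⟩
  · by_contra! hm
    exact (countBelow_mono A hm).not_gt h
  · refine (ssubset_iff_of_subset (monotone_filter_right A fun _ _ hb => hb.trans h)).2
      ⟨a, ?_, ?_⟩ <;> simp [ha, h]

lemma countBelow_succ_of_notMem {a : Fin n} (ha : a ∉ A) :
    countBelow A (a + 1) = countBelow A a := by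
  refine congrArg card (filter_congr fun b hb => ?_)
  have : (b : ℕ) ≠ a := fun h => ha (Fin.ext h ▸ hb)
  omega

lemma strictMonoOn_countBelow : StrictMonoOn (fun a : Fin n => countBelow A a) A :=
  fun _ ha _ _ hab => (countBelow_lt_countBelow_iff ha).2 hab

lemma countBelow_image (σ : Equiv.Perm (Fin n)) (m : ℕ) :
    countBelow (A.image σ) m = #{a ∈ A | (σ a).val < m} := by
  rw [countBelow, filter_image, card_image_of_injective _ σ.injective]

end CountBelow

section MergePerm

noncomputable def orderIsoOfCardEq {S T : Finset (Fin n)} (h : #S = #T) : S ≃o T :=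
  (S.orderIsoOfFin h).symm.trans (T.orderIsoOfFin rfl)

lemma card_compl_eq_card_compl {S T : Finset (Fin n)} (h : #S = #T) : #Sᶜ = #Tᶜ := by
  rw [card_compl, card_compl, h]

variable (S T : Finset (Fin n)) (h : #S = #T)

noncomputable def mergePerm : Equiv.Perm (Fin n) :=
  Equiv.subtypeCongr (orderIsoOfCardEq h).toEquiv
    ((Equiv.subtypeEquivRight fun _ => mem_compl.symm).trans <|
      (orderIsoOfCardEq (card_compl_eq_card_compl h)).toEquiv.trans
        (Equiv.subtypeEquivRight fun _ => mem_compl))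

lemma mergePerm_apply_of_mem {a : Fin n} (ha : a ∈ S) :
    mergePerm S T h a = orderIsoOfCardEq h ⟨a, ha⟩ := by
  rw [mergePerm, Equiv.subtypeCongr, Equiv.trans_apply, Equiv.sumCompl_symm_apply_of_pos ha]
  rfl

lemma mergePerm_apply_of_notMem {a : Fin n} (ha : a ∉ S) :
    mergePerm S T h a = orderIsoOfCardEq (card_compl_eq_card_compl h) ⟨a, mem_compl.2 ha⟩ := by
  rw [mergePerm, Equiv.subtypeCongr, Equiv.trans_apply, Equiv.sumCompl_symm_apply_of_neg ha]
  rfl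

lemma mergePerm_mem_iff (a : Fin n) : mergePerm S T h a ∈ T ↔ a ∈ S := by
  by_cases ha : a ∈ S
  · simp [ha, mergePerm_apply_of_mem S T h ha]
  · simp only [ha, iff_false, mergePerm_apply_of_notMem S T h ha]
    exact mem_compl.1 (Subtype.prop _)

lemma strictMonoOn_mergePerm : StrictMonoOn (mergePerm S T h) S := by
  intro a ha b hb hab
  rw [mergePerm_apply_of_mem S T h ha, mergePerm_apply_of_mem S T h hb]
  simpa using hab

lemma strictMonoOn_mergePerm_compl : StrictMonoOn (mergePerm S T h) ↑Sᶜ := by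
  intro a ha b hb hab
  rw [coe_compl, Set.mem_compl_iff, mem_coe] at ha hb
  rw [mergePerm_apply_of_notMem S T h ha, mergePerm_apply_of_notMem S T h hb]
  simpa using hab

end MergePerm

section TwoIncreasingRuns

variable {σ : Equiv.Perm (Fin n)} {S T : Finset (Fin n)}

lemma avoids321_of_strictMonoOn (h₁ : StrictMonoOn σ S) (h₂ : StrictMonoOn σ ↑Sᶜ) :
    Avoids321 σ := by
  have hparts : ∀ x y, x < y → σ y < σ x → (x ∈ S ↔ y ∉ S) := by
    intro x y hxy hyx
    constructor
    · exact fun hx hy => (h₁ hx hy hxy).not_gt hyx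
    · intro hy
      by_contra hx
      exact (h₂ (by simpa using hx) (by simpa using hy) hxy).not_gt hyx
  rintro ⟨i, j, k, hij, hjk, hkj, hji⟩
  have := hparts i j hij hji
  have := hparts j k hjk hkj
  have := hparts i k (hij.trans hjk) (hkj.trans hji)
  tauto

lemma image_eq_of_forall_mem_iff (hST : ∀ a, σ a ∈ T ↔ a ∈ S) : S.image σ = T := by
  ext v
  rw [← σ.apply_symm_apply v, hST, σ.injective.mem_finset_image]

lemma countBelow_apply_of_strictMonoOn (hST : ∀ a, σ a ∈ T ↔ a ∈ S)
    (hσ : StrictMonoOn σ S) {a : Fin n} (ha : a ∈ S) :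
    countBelow T (σ a) = countBelow S a := by
  rw [← image_eq_of_forall_mem_iff hST, countBelow_image, countBelow]
  congr 1
  refine filter_congr fun b hb => ?_
  rw [← Fin.lt_def, ← Fin.lt_def]
  exact hσ.lt_iff_lt hb ha

lemma apply_eq_apply_of_strictMonoOn {τ : Equiv.Perm (Fin n)}
    (hσT : ∀ a, σ a ∈ T ↔ a ∈ S) (hτT : ∀ a, τ a ∈ T ↔ a ∈ S)
    (hσ : StrictMonoOn σ S) (hτ : StrictMonoOn τ S) {a : Fin n} (ha : a ∈ S) : σ a = τ a :=
  strictMonoOn_countBelow.injOn ((hσT a).2 ha) ((hτT a).2 ha)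
    ((countBelow_apply_of_strictMonoOn hσT hσ ha).trans
      (countBelow_apply_of_strictMonoOn hτT hτ ha).symm)

lemma eq_mergePerm (hST : ∀ a, σ a ∈ T ↔ a ∈ S) (h₁ : StrictMonoOn σ S)
    (h₂ : StrictMonoOn σ ↑Sᶜ) (h : #S = #T) : σ = mergePerm S T h := by
  ext1 a
  by_cases ha : a ∈ S
  · exact apply_eq_apply_of_strictMonoOn hST (mergePerm_mem_iff S T h) h₁
      (strictMonoOn_mergePerm S T h) ha
  · exact apply_eq_apply_of_strictMonoOn (T := Tᶜ) (by simp [hST]) (by simp [mergePerm_mem_iff])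
      h₂ (strictMonoOn_mergePerm_compl S T h) (mem_compl.2 ha)

lemma image_mergePerm (h : #S = #T) : S.image (mergePerm S T h) = T :=
  image_eq_of_forall_mem_iff (mergePerm_mem_iff S T h)

lemma countBelow_mergePerm (h : #S = #T) {a : Fin n} (ha : a ∈ S) :
    countBelow T (mergePerm S T h a) = countBelow S a :=
  countBelow_apply_of_strictMonoOn (mergePerm_mem_iff S T h) (strictMonoOn_mergePerm S T h) ha

lemma countBelow_compl_mergePerm (h : #S = #T) {a : Fin n} (ha : a ∉ S) :
    countBelow Tᶜ (mergePerm S T h a) = countBelow Sᶜ a :=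
  countBelow_apply_of_strictMonoOn (by simp [mergePerm_mem_iff])
    (strictMonoOn_mergePerm_compl S T h) (mem_compl.2 ha)

lemma avoids321_mergePerm (h : #S = #T) : Avoids321 (mergePerm S T h) :=
  avoids321_of_strictMonoOn (strictMonoOn_mergePerm S T h) (strictMonoOn_mergePerm_compl S T h)

end TwoIncreasingRuns

section LeftToRightMaxima

variable (σ : Equiv.Perm (Fin n))

def lrMaxSet : Finset (Fin n) := {a | IsLRMax σ a}

variable {σ}

lemma le_apply_of_forall_apply_le {a b : Fin n} (h : ∀ j ≤ b, σ j ≤ σ a) : b ≤ σ a := by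
  have hcard : #(Iic b) ≤ #(Iic (σ a)) :=
    card_le_card_of_injOn σ (fun j hj => by simpa using h j (by simpa using hj))
      σ.injective.injOn
  rw [Fin.card_Iic, Fin.card_Iic] at hcard
  exact Fin.le_def.2 (by omega)

lemma IsLRMax.le_apply {a : Fin n} (h : IsLRMax σ a) : a ≤ σ a :=
  le_apply_of_forall_apply_le h

lemma strictMonoOn_lrMaxSet : StrictMonoOn σ (lrMaxSet σ) := by
  intro a ha b hb hab
  have hb : IsLRMax σ b := by simpa [lrMaxSet] using hb
  exact (hb a hab.le).lt_of_ne (σ.injective.ne hab.ne)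

lemma strictMonoOn_compl_lrMaxSet (hσ : Avoids321 σ) : StrictMonoOn σ ↑(lrMaxSet σ)ᶜ := by
  intro a ha b _ hab
  have ha : ¬ IsLRMax σ a := by simpa [lrMaxSet] using ha
  obtain ⟨i, hia, hai⟩ : ∃ i ≤ a, σ a < σ i := by simpa [IsLRMax] using ha
  refine lt_of_not_ge fun hba => hσ ⟨i, a, b, ?_, hab, ?_, hai⟩
  · exact hia.lt_of_ne fun h => (h ▸ hai).false
  · exact hba.lt_of_ne (σ.injective.ne hab.ne')

lemma eq_mergePerm_of_lrMaxSet (hσ : Avoids321 σ) {S T : Finset (Fin n)} (hS : lrMaxSet σ = S)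
    (hT : (lrMaxSet σ).image σ = T) (h : #S = #T) : σ = mergePerm S T h := by
  subst hS hT
  exact eq_mergePerm (fun a => σ.injective.mem_finset_image) strictMonoOn_lrMaxSet
    (strictMonoOn_compl_lrMaxSet hσ) h

end LeftToRightMaxima

section Inversions

variable {σ : Equiv.Perm (Fin n)}

lemma card_filter_apply_lt (σ : Equiv.Perm (Fin n)) (v : Fin n) : #{j | σ j < v} = v := by
  rw [← Fin.card_Iio v, ← filter_gt_eq_Iio]
  exact card_equiv σ (by simp)

lemma invPerm_eq_sum : invPerm σ = ∑ a, #{j | a < j ∧ σ j < σ a} := by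
  simp only [invPerm, card_filter, Fintype.sum_prod_type]

lemma card_inversions_of_isLRMax {a : Fin n} (ha : IsLRMax σ a) :
    #{j | a < j ∧ σ j < σ a} = σ a - a := by
  have hsplit := card_filter_add_card_filter_not (s := {j | σ j < σ a}) (p := (a < ·))
  have hbefore : univ.filter (fun j => σ j < σ a ∧ ¬ a < j) = univ.filter (· < a) := by
    ext j
    simp only [mem_filter, mem_univ, true_and, not_lt]
    refine ⟨fun h => h.2.lt_of_ne fun hja => (hja ▸ h.1).false, fun h => ⟨?_, h.le⟩⟩
    exact (ha j h.le).lt_of_ne (σ.injective.ne h.ne)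
  rw [filter_filter, filter_filter, hbefore, filter_gt_eq_Iio, Fin.card_Iio,
    card_filter_apply_lt] at hsplit
  simp only [and_comm] at hsplit
  omega

lemma card_inversions_of_not_isLRMax (hσ : Avoids321 σ) {a : Fin n} (ha : ¬ IsLRMax σ a) :
    #{j | a < j ∧ σ j < σ a} = 0 := by
  obtain ⟨i, hia, hai⟩ : ∃ i ≤ a, σ a < σ i := by simpa [IsLRMax] using ha
  rw [card_eq_zero, filter_eq_empty_iff]
  exact fun j _ ⟨haj, hja⟩ =>
    hσ ⟨i, a, j, hia.lt_of_ne fun h => (h ▸ hai).false, haj, hja, hai⟩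

lemma invPerm_eq_sum_lrMaxSet (hσ : Avoids321 σ) :
    invPerm σ = ∑ a ∈ lrMaxSet σ, ((σ a : ℕ) - a) := by
  rw [invPerm_eq_sum, lrMaxSet, sum_filter]
  refine sum_congr rfl fun a _ => ?_
  split_ifs with ha
  · exact card_inversions_of_isLRMax ha
  · exact card_inversions_of_not_isLRMax hσ ha

end Inversions

section Dominance

/-- Characterises the sets `S` of positions and `T` of values of the left-to-right maxima of
321-avoiding permutations. -/
structure Dominates (S T : Finset (Fin n)) : Prop where
  card_eq : #S = #T
  countBelow_le : ∀ m, countBelow T m ≤ countBelow S m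
  countBelow_lt : ∀ a ∉ S, countBelow T a < countBelow S a

variable {S T : Finset (Fin n)} (hST : Dominates S T)
include hST

lemma Dominates.le_mergePerm {a : Fin n} (ha : a ∈ S) : a ≤ mergePerm S T hST.card_eq a := by
  have hT := (mergePerm_mem_iff S T hST.card_eq a).2 ha
  have hrank := countBelow_mergePerm hST.card_eq ha
  by_contra! hlt
  have := (countBelow_lt_countBelow_iff hT).2 (Fin.lt_def.1 hlt)
  have := hST.countBelow_le a
  omega

lemma Dominates.isLRMax_mergePerm {a : Fin n} (ha : a ∈ S) :
    IsLRMax (mergePerm S T hST.card_eq) a := by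
  intro j hja
  by_cases hj : j ∈ S
  · exact (strictMonoOn_mergePerm S T hST.card_eq).monotoneOn hj ha hja
  have hja : (j : ℕ) < a := Fin.lt_def.1 (hja.lt_of_ne fun h => hj (h ▸ ha))
  have hσj : mergePerm S T hST.card_eq j ∈ Tᶜ := by simp [mergePerm_mem_iff, hj]
  -- the image of `j` lies in `Tᶜ`; compare its rank there with that of the image of `a`
  refine (Fin.lt_def.2 ((countBelow_lt_countBelow_iff hσj).1 ?_)).le
  have h1 := (countBelow_lt_countBelow_iff (mem_compl.2 hj)).2 hja
  have h2 := countBelow_mergePerm hST.card_eq ha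
  have h3 := countBelow_add_countBelow_compl S a.isLt.le
  have h4 := countBelow_add_countBelow_compl T (mergePerm S T hST.card_eq a).isLt.le
  have h5 := Fin.le_def.1 (hST.le_mergePerm ha)
  rw [countBelow_compl_mergePerm hST.card_eq hj]
  omega

lemma Dominates.not_isLRMax_mergePerm {a : Fin n} (ha : a ∉ S) :
    ¬ IsLRMax (mergePerm S T hST.card_eq) a := by
  -- pigeonhole: fewer elements of `T` than of `S` lie below `a`, so some `s ∈ S` below `a` is
  -- sent to at least `a`; comparing ranks in `Tᶜ`, the image of `a` then lies below that of `s`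
  have hlt := hST.countBelow_lt a ha
  rw [← image_eq_of_forall_mem_iff (mergePerm_mem_iff S T hST.card_eq), countBelow_image,
    countBelow] at hlt
  obtain ⟨s, hs, hs'⟩ := exists_mem_notMem_of_card_lt_card hlt
  simp only [mem_filter, not_and, not_lt] at hs hs'
  obtain ⟨hsS, hsa⟩ := hs
  have hsa' := hs' hsS
  have hσa : mergePerm S T hST.card_eq a ∈ Tᶜ := by simp [mergePerm_mem_iff, ha]
  refine fun hmax => (hmax s (Fin.le_def.2 hsa.le)).not_gt
    (Fin.lt_def.2 ((countBelow_lt_countBelow_iff hσa).1 ?_))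
  have h1 := (countBelow_lt_countBelow_iff hsS).2 hsa
  have h2 := countBelow_mergePerm hST.card_eq hsS
  have h3 := countBelow_add_countBelow_compl S a.isLt.le
  have h4 := countBelow_add_countBelow_compl T (mergePerm S T hST.card_eq s).isLt.le
  have h5 := countBelow_le_self S a.isLt.le
  rw [countBelow_compl_mergePerm hST.card_eq ha]
  omega

lemma Dominates.lrMaxSet_mergePerm : lrMaxSet (mergePerm S T hST.card_eq) = S := by
  ext a
  simp only [lrMaxSet, mem_filter, mem_univ, true_and]
  exact ⟨fun h => by_contra fun ha => hST.not_isLRMax_mergePerm ha h, hST.isLRMax_mergePerm⟩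

end Dominance

lemma lrMaxSet_filter_apply_lt_subset (σ : Equiv.Perm (Fin n)) (m : ℕ) :
    {a ∈ lrMaxSet σ | (σ a).val < m} ⊆ {a ∈ lrMaxSet σ | a.val < m} :=
  monotone_filter_right _ fun a ha hσa =>
    lt_of_le_of_lt (Fin.le_def.1 (IsLRMax.le_apply (by simpa [lrMaxSet] using ha))) hσa

lemma dominates_lrMaxSet (σ : Equiv.Perm (Fin n)) :
    Dominates (lrMaxSet σ) ((lrMaxSet σ).image σ) where
  card_eq := (card_image_of_injective _ σ.injective).symm
  countBelow_le m := by
    rw [countBelow_image]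
    exact card_le_card (lrMaxSet_filter_apply_lt_subset σ m)
  countBelow_lt a ha := by
    have ha : ¬ IsLRMax σ a := by simpa [lrMaxSet] using ha
    -- the largest value among the first `a + 1` positions sits at a left-to-right maximum `b < a`
    obtain ⟨b, hba, hb⟩ := exists_max_image (Iic a) σ nonempty_Iic
    rw [mem_Iic] at hba
    have hbmax : IsLRMax σ b := fun j hj => hb j (mem_Iic.2 (hj.trans hba))
    have hab : a ≤ σ b := le_apply_of_forall_apply_le fun j hj => hb j (mem_Iic.2 hj)
    have hba : b < a := hba.lt_of_ne fun h => ha (h ▸ hbmax)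
    rw [countBelow_image, countBelow]
    exact card_lt_card ((ssubset_iff_of_subset (lrMaxSet_filter_apply_lt_subset σ a)).2
      ⟨b, by simp [lrMaxSet, hbmax, hba], by simp [hab]⟩)

def eSteps (W : Fin n → Bool) : Finset (Fin n) := {j | W j = false}

lemma mem_eSteps {W : Fin n → Bool} {j : Fin n} : j ∈ eSteps W ↔ W j = false := by
  simp [eSteps]

lemma eSteps_injective : Function.Injective (eSteps (n := n)) := by
  intro W W' h
  funext j
  have := congrArg (j ∈ ·) h
  simp only [mem_eSteps, eq_iff_iff] at this
  cases hW : W j <;> cases hW' : W' j <;> simp_all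

lemma exists_eSteps_eq (A : Finset (Fin n)) : ∃ W, eSteps W = A :=
  ⟨fun j => decide (j ∉ A), by ext j; simp [eSteps]⟩

lemma upCt_add_countBelow_eSteps (W : Fin n → Bool) {m : ℕ} (hm : m ≤ n) :
    UpCt W m + countBelow (eSteps W) m = m := by
  have hprefix := Fin.card_filter_val_lt (n := n) (m := m)
  rw [min_eq_right hm, ← card_filter_add_card_filter_not (p := fun j : Fin n => W j = true),
    filter_filter, filter_filter] at hprefix
  rw [UpCt, countBelow, eSteps, filter_filter]
  convert hprefix using 3
  ext j
  simp [and_comm]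

lemma isShortPoly_iff_dominates {P Q : Fin n → Bool} :
    IsShortPoly P Q ↔ Dominates (eSteps Q) (eSteps P) := by
  have hP := fun {m : ℕ} (hm : m ≤ n) => upCt_add_countBelow_eSteps P hm
  have hQ := fun {m : ℕ} (hm : m ≤ n) => upCt_add_countBelow_eSteps Q hm
  have hcardP := countBelow_of_le (eSteps P) le_rfl
  have hcardQ := countBelow_of_le (eSteps Q) le_rfl
  constructor
  · rintro ⟨hend, habove, hshare⟩
    have hcard : #(eSteps Q) = #(eSteps P) := by
      have := hP le_rfl; have := hQ le_rfl; omega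
    refine ⟨hcard, fun m => ?_, fun a ha => ?_⟩
    · rcases le_or_gt m n with hm | hm
      · have := hP hm; have := hQ hm; have := habove m hm; omega
      · rw [countBelow_of_le _ hm.le, countBelow_of_le _ hm.le, hcard]
    have hQa : Q a = true := by simpa [mem_eSteps] using ha
    have := hP a.isLt.le; have := hQ a.isLt.le; have := habove a a.isLt.le
    cases hPa : P a
    · -- `Q` rises at `a` while `P` does not, and `Q` is still weakly below `P` afterwards
      have h1 := (countBelow_lt_countBelow_iff (mem_eSteps.2 hPa)).2 (Nat.lt_add_one a)
      have h2 := countBelow_succ_of_notMem ha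
      have := hP (m := a + 1) a.isLt; have := hQ (m := a + 1) a.isLt
      have := habove (a + 1) a.isLt
      omega
    · have := hshare a
      simp only [hPa, hQa, and_self, not_true_eq_false, imp_false] at this
      omega
  · rintro ⟨hcard, hle, hlt⟩
    refine ⟨by have := hP le_rfl; have := hQ le_rfl; omega, fun i hi => ?_,
      fun j _ ⟨hPj, hQj⟩ => ?_⟩
    · have := hP hi; have := hQ hi; have := hle i; omega
    · have := hP j.isLt.le; have := hQ j.isLt.le
      have := hlt j (by simp [mem_eSteps, hQj])
      omega

lemma eSum_eq_sum_eSteps (W : Fin n → Bool) : eSum W = ∑ j ∈ eSteps W, UpCt W j := rfl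

lemma areaPoly_eq_invPerm_mergePerm {P Q : Fin n → Bool} (h : Dominates (eSteps Q) (eSteps P)) :
    areaPoly P Q = invPerm (mergePerm (eSteps Q) (eSteps P) h.card_eq) := by
  have hP : eSum P = ∑ a ∈ eSteps Q, UpCt P (mergePerm _ _ h.card_eq a) := by
    have := sum_image (f := fun t : Fin n => UpCt P t) (s := eSteps Q)
      (mergePerm _ _ h.card_eq).injective.injOn
    rwa [image_mergePerm] at this
  have hsplit : eSum P = invPerm (mergePerm _ _ h.card_eq) + eSum Q := by
    rw [hP, invPerm_eq_sum_lrMaxSet (avoids321_mergePerm _), h.lrMaxSet_mergePerm,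
      eSum_eq_sum_eSteps, ← sum_add_distrib]
    refine sum_congr rfl fun a ha => ?_
    have := upCt_add_countBelow_eSteps P (mergePerm _ _ h.card_eq a).isLt.le
    have := upCt_add_countBelow_eSteps Q a.isLt.le
    have := countBelow_mergePerm h.card_eq ha
    have := Fin.le_def.1 (h.le_mergePerm ha)
    omega
  rw [areaPoly, hsplit, Nat.add_sub_cancel]

theorem stmt8_general (n : ℕ) :
    ∃ Υ : {PQ : (Fin n → Bool) × (Fin n → Bool) // PQ ∈ ShortSet n} →
        {σ : Equiv.Perm (Fin n) // σ ∈ Av n},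
      Function.Bijective Υ ∧
        ∀ PQ : {PQ : (Fin n → Bool) × (Fin n → Bool) // PQ ∈ ShortSet n},
          areaPoly PQ.1.1 PQ.1.2 = invPerm (Υ PQ).1 ∧ colPoly PQ.1.2 = lrm (Υ PQ).1 := by
  have hdom (PQ : {PQ : (Fin n → Bool) × (Fin n → Bool) // PQ ∈ ShortSet n}) :
      Dominates (eSteps PQ.1.2) (eSteps PQ.1.1) :=
    isShortPoly_iff_dominates.1 (mem_filter.1 PQ.2).2
  refine ⟨fun PQ => ⟨mergePerm _ _ (hdom PQ).card_eq,
      mem_filter.2 ⟨mem_univ _, avoids321_mergePerm _⟩⟩,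
    ⟨fun PQ PQ' hσ => ?_, fun ⟨σ, hσ⟩ => ?_⟩,
    fun PQ => ⟨areaPoly_eq_invPerm_mergePerm (hdom PQ),
      congrArg card (hdom PQ).lrMaxSet_mergePerm.symm⟩⟩
  · have hσ : mergePerm _ _ (hdom PQ).card_eq = mergePerm _ _ (hdom PQ').card_eq :=
      congrArg Subtype.val hσ
    have hQ : eSteps PQ.1.2 = eSteps PQ'.1.2 := by
      rw [← (hdom PQ).lrMaxSet_mergePerm, ← (hdom PQ').lrMaxSet_mergePerm, hσ]
    have hP : eSteps PQ.1.1 = eSteps PQ'.1.1 := by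
      rw [← image_mergePerm (hdom PQ).card_eq, ← image_mergePerm (hdom PQ').card_eq, hσ, hQ]
    exact Subtype.ext (Prod.ext (eSteps_injective hP) (eSteps_injective hQ))
  · have hσ : Avoids321 σ := (mem_filter.1 hσ).2
    obtain ⟨P, hP⟩ := exists_eSteps_eq ((lrMaxSet σ).image σ)
    obtain ⟨Q, hQ⟩ := exists_eSteps_eq (lrMaxSet σ)
    have hPQ : Dominates (eSteps Q) (eSteps P) := hP ▸ hQ ▸ dominates_lrMaxSet σ
    exact ⟨⟨(P, Q), mem_filter.2 ⟨mem_univ _, isShortPoly_iff_dominates.2 hPQ⟩⟩,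
      Subtype.ext (eq_mergePerm_of_lrMaxSet hσ hQ.symm hP.symm hPQ.card_eq).symm⟩

/-- there is a bijection Υ from shortened polyominoes `ℋ_n` to `Av_n(321)`
with `area(P,Q) = inv Υ(P,Q)` and `col(P,Q) = lrm Υ(P,Q)`. -/
theorem stmt8 (n : ℕ) (hn : 1 ≤ n) :
    ∃ Υ : {PQ : (Fin n → Bool) × (Fin n → Bool) // PQ ∈ ShortSet n} →
        {σ : Equiv.Perm (Fin n) // σ ∈ Av n},
      Function.Bijective Υ ∧
        ∀ PQ : {PQ : (Fin n → Bool) × (Fin n → Bool) // PQ ∈ ShortSet n},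
          areaPoly PQ.1.1 PQ.1.2 = invPerm (Υ PQ).1 ∧ colPoly PQ.1.2 = lrm (Υ PQ).1 :=
  stmt8_general n
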